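/- LTLEBR is strictly less expressive than full LTLEBR+P: every ω-language definable by an LTLEBR formula is definable by an LTLEBR+P formula, but not vice versa; i.e. ⟦LTLEBR⟧ ⊊ ⟦LTLEBR+P⟧. -/

import Mathlib

/-- Syntax of LTL with Past (LTL+P) over proposition letters of type `α`. -/
inductive Formula (α : Type) : Type
  | atom  : α → Formula α                       -- proposition letter
  | not   : Formula α → Formula α               -- ¬
  | or    : Formula α → Formula α → Formula α   -- ∨
  | and   : Formula α → Formula α → Formula α   -- ∧
  | next  : Formula α → Formula α               -- X
  | untl  : Formula α → Formula α → Formula α   -- U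
  | rels  : Formula α → Formula α → Formula α   -- R
  | ev    : Formula α → Formula α               -- F
  | glob  : Formula α → Formula α               -- G
  | yest  : Formula α → Formula α               -- Y
  | wyest : Formula α → Formula α               -- Z
  | since : Formula α → Formula α → Formula α   -- S
  | trig  : Formula α → Formula α → Formula α   -- T
  | once  : Formula α → Formula α               -- O
  | hist  : Formula α → Formula α               -- H

namespace Formula

/-- Satisfaction `σ, i ⊨ φ` of an LTL+P formula by a state sequence
(an infinite word `σ : ℕ → Set α`) at position `i`. -/
def Sat {α : Type} (σ : ℕ → Set α) : Formula α → ℕ → Prop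
  | .atom p, i => p ∈ σ i
  | .not φ, i => ¬ Sat σ φ i
  | .or φ ψ, i => Sat σ φ i ∨ Sat σ ψ i
  | .and φ ψ, i => Sat σ φ i ∧ Sat σ ψ i
  | .next φ, i => Sat σ φ (i + 1)
  | .untl φ ψ, i => ∃ j, i ≤ j ∧ Sat σ ψ j ∧ ∀ k, i ≤ k → k < j → Sat σ φ k
  | .rels φ ψ, i => (∀ j, i ≤ j → Sat σ ψ j) ∨
      (∃ n, i ≤ n ∧ Sat σ φ n ∧ ∀ m, i ≤ m → m ≤ n → Sat σ ψ m)
  | .ev φ, i => ∃ j, i ≤ j ∧ Sat σ φ j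
  | .glob φ, i => ∀ j, i ≤ j → Sat σ φ j
  | .yest φ, i => 0 < i ∧ Sat σ φ (i - 1)
  | .wyest φ, i => i = 0 ∨ Sat σ φ (i - 1)
  | .since φ ψ, i => ∃ j, j ≤ i ∧ Sat σ ψ j ∧ ∀ k, j < k → k ≤ i → Sat σ φ k
  | .trig φ ψ, i => (∀ j, j ≤ i → Sat σ ψ j) ∨
      (∃ n, n ≤ i ∧ Sat σ φ n ∧ ∀ m, n ≤ m → m ≤ i → Sat σ ψ m)
  | .once φ, i => ∃ j, j ≤ i ∧ Sat σ φ j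
  | .hist φ, i => ∀ j, j ≤ i → Sat σ φ j

/-- The ω-language of a formula: the set of state sequences satisfying it at position 0. -/
def Lang {α : Type} (φ : Formula α) : Set (ℕ → Set α) := {σ | Sat σ φ 0}

end Formula

open Formula

/-- `σ_{[0,i]} · σ'` : the infinite word whose first `i+1` letters come from `σ`
and which then continues as `σ'`. -/
def extendPrefix {α : Type} (σ : ℕ → Set α) (i : ℕ) (σ' : ℕ → Set α) : ℕ → Set α :=
  fun n => if n ≤ i then σ n else σ' (n - (i + 1))

/-- `L` is a safety ω-language: every word not in `L` has a finite prefix all of whose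
infinite extensions are not in `L`. -/
def IsSafety {α : Type} (L : Set (ℕ → Set α)) : Prop :=
  ∀ σ : ℕ → Set α, σ ∉ L → ∃ i : ℕ, ∀ σ' : ℕ → Set α, extendPrefix σ i σ' ∉ L

/-- `X^n φ`. -/
def nextPow {α : Type} : ℕ → Formula α → Formula α
  | 0, φ => φ
  | n + 1, φ => .next (nextPow n φ)

/-- `⋀_{j=0}^{n} X^j φ`. -/
def nextChain {α : Type} (φ : Formula α) : ℕ → Formula α
  | 0 => φ
  | n + 1 => .and (nextChain φ n) (nextPow (n + 1) φ)

/-- The `i`-th disjunct of the bounded until: `X^i ψ₂ ∧ ⋀_{j=0}^{i-1} X^j ψ₁`. -/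
def buntilTerm {α : Type} (ψ₁ ψ₂ : Formula α) : ℕ → Formula α
  | 0 => ψ₂
  | n + 1 => .and (nextPow (n + 1) ψ₂) (nextChain ψ₁ n)

/-- Bounded until `ψ₁ U^[a,b] ψ₂ = ⋁_{i=a}^{b} (X^i ψ₂ ∧ ⋀_{j=0}^{i-1} X^j ψ₁)`. -/
def buntil {α : Type} (a b : ℕ) (ψ₁ ψ₂ : Formula α) : Formula α :=
  ((List.range' (a + 1) (b - a)).map (buntilTerm ψ₁ ψ₂)).foldl .or (buntilTerm ψ₁ ψ₂ a)

/-- Pure past layer of LTLEBR+P : `η ::= p | ¬η | η∨η | Yη | ηSη`. -/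
inductive PurePastL {α : Type} : Formula α → Prop
  | atom (p : α) : PurePastL (.atom p)
  | not {φ} : PurePastL φ → PurePastL (.not φ)
  | or {φ ψ} : PurePastL φ → PurePastL ψ → PurePastL (.or φ ψ)
  | yest {φ} : PurePastL φ → PurePastL (.yest φ)
  | since {φ ψ} : PurePastL φ → PurePastL ψ → PurePastL (.since φ ψ)

/-- Bounded future layer over a base: `ψ ::= base | ¬ψ | ψ∨ψ | Xψ | ψ U^[a,b] ψ`. -/
inductive BFLayer {α : Type} (base : Formula α → Prop) : Formula α → Prop
  | base {φ} : base φ → BFLayer base φ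
  | not {φ} : BFLayer base φ → BFLayer base (.not φ)
  | or {φ ψ} : BFLayer base φ → BFLayer base ψ → BFLayer base (.or φ ψ)
  | next {φ} : BFLayer base φ → BFLayer base (.next φ)
  | bu (a b : ℕ) {φ ψ} : BFLayer base φ → BFLayer base ψ → BFLayer base (buntil a b φ ψ)

/-- Future layer: `φ ::= ψ | φ∧φ | Xφ | Gφ | ψRφ`. -/
inductive FLayer {α : Type} (base : Formula α → Prop) : Formula α → Prop
  | bf {φ} : BFLayer base φ → FLayer base φ
  | and {φ ψ} : FLayer base φ → FLayer base ψ → FLayer base (.and φ ψ)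
  | next {φ} : FLayer base φ → FLayer base (.next φ)
  | glob {φ} : FLayer base φ → FLayer base (.glob φ)
  | rels {φ ψ} : BFLayer base φ → FLayer base ψ → FLayer base (.rels φ ψ)

/-- Boolean layer: `χ ::= φ | χ∨χ | χ∧χ`. -/
inductive BLayer {α : Type} (base : Formula α → Prop) : Formula α → Prop
  | f {φ} : FLayer base φ → BLayer base φ
  | or {φ ψ} : BLayer base φ → BLayer base ψ → BLayer base (.or φ ψ)
  | and {φ ψ} : BLayer base φ → BLayer base ψ → BLayer base (.and φ ψ)

/-- LTLEBR+P formulas: layered grammar whose innermost layer is the pure past layer. -/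
def IsLTLEBRP {α : Type} (φ : Formula α) : Prop := BLayer PurePastL φ

/-- LTLEBR formulas: LTLEBR+P without the pure past layer
(the bounded future layer starts from proposition letters). -/
def IsLTLEBR {α : Type} (φ : Formula α) : Prop :=
  BLayer (fun ψ => ∃ p, ψ = Formula.atom p) φ

/-- Formulas with no past operators (pure future LTL). -/
def FutureOnly {α : Type} : Formula α → Prop
  | .atom _ => True
  | .not φ => FutureOnly φ
  | .or φ ψ => FutureOnly φ ∧ FutureOnly ψ
  | .and φ ψ => FutureOnly φ ∧ FutureOnly ψ
  | .next φ => FutureOnly φ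
  | .untl φ ψ => FutureOnly φ ∧ FutureOnly ψ
  | .rels φ ψ => FutureOnly φ ∧ FutureOnly ψ
  | .ev φ => FutureOnly φ
  | .glob φ => FutureOnly φ
  | .yest _ => False
  | .wyest _ => False
  | .since _ _ => False
  | .trig _ _ => False
  | .once _ => False
  | .hist _ => False

/-- Negated normal form: `nnf b φ` is the NNF of `φ` if `b = false`, of `¬φ` if `b = true`. -/
def nnf {α : Type} : Bool → Formula α → Formula α
  | false, .atom p => .atom p
  | true, .atom p => .not (.atom p)
  | b, .not φ => nnf (!b) φ
  | false, .or φ ψ => .or (nnf false φ) (nnf false ψ)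
  | true, .or φ ψ => .and (nnf true φ) (nnf true ψ)
  | false, .and φ ψ => .and (nnf false φ) (nnf false ψ)
  | true, .and φ ψ => .or (nnf true φ) (nnf true ψ)
  | b, .next φ => .next (nnf b φ)
  | false, .untl φ ψ => .untl (nnf false φ) (nnf false ψ)
  | true, .untl φ ψ => .rels (nnf true φ) (nnf true ψ)
  | false, .rels φ ψ => .rels (nnf false φ) (nnf false ψ)
  | true, .rels φ ψ => .untl (nnf true φ) (nnf true ψ)
  | false, .ev φ => .ev (nnf false φ)
  | true, .ev φ => .glob (nnf true φ)
  | false, .glob φ => .glob (nnf false φ)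
  | true, .glob φ => .ev (nnf true φ)
  | false, .yest φ => .yest (nnf false φ)
  | true, .yest φ => .wyest (nnf true φ)
  | false, .wyest φ => .wyest (nnf false φ)
  | true, .wyest φ => .yest (nnf true φ)
  | false, .since φ ψ => .since (nnf false φ) (nnf false ψ)
  | true, .since φ ψ => .trig (nnf true φ) (nnf true ψ)
  | false, .trig φ ψ => .trig (nnf false φ) (nnf false ψ)
  | true, .trig φ ψ => .since (nnf true φ) (nnf true ψ)
  | false, .once φ => .once (nnf false φ)
  | true, .once φ => .hist (nnf true φ)
  | false, .hist φ => .hist (nnf false φ)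
  | true, .hist φ => .once (nnf true φ)

/-- The formula contains no until (`U`) and no eventually (`F`) operator. -/
def NoUF {α : Type} : Formula α → Prop
  | .atom _ => True
  | .not φ => NoUF φ
  | .or φ ψ => NoUF φ ∧ NoUF ψ
  | .and φ ψ => NoUF φ ∧ NoUF ψ
  | .next φ => NoUF φ
  | .untl _ _ => False
  | .rels φ ψ => NoUF φ ∧ NoUF ψ
  | .ev _ => False
  | .glob φ => NoUF φ
  | .yest φ => NoUF φ
  | .wyest φ => NoUF φ
  | .since φ ψ => NoUF φ ∧ NoUF ψ
  | .trig φ ψ => NoUF φ ∧ NoUF ψ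
  | .once φ => NoUF φ
  | .hist φ => NoUF φ

/-- safetyLTL: pure-future LTL formulas whose negated normal form
contains no `U` and no `F`. -/
def IsSafetyLTL {α : Type} (φ : Formula α) : Prop :=
  FutureOnly φ ∧ NoUF (nnf false φ)

/-- LTLBP (bounded past LTL): Boolean combinations of proposition letters
and yesterday operators. -/
inductive IsLTLBP {α : Type} : Formula α → Prop
  | atom (p : α) : IsLTLBP (.atom p)
  | not {φ} : IsLTLBP φ → IsLTLBP (.not φ)
  | or {φ ψ} : IsLTLBP φ → IsLTLBP ψ → IsLTLBP (.or φ ψ)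
  | and {φ ψ} : IsLTLBP φ → IsLTLBP ψ → IsLTLBP (.and φ ψ)
  | yest {φ} : IsLTLBP φ → IsLTLBP (.yest φ)

/-- Temporal depth `D` of an LTLBP formula. -/
def depth {α : Type} : Formula α → ℕ
  | .not φ => depth φ
  | .or φ ψ => max (depth φ) (depth ψ)
  | .and φ ψ => max (depth φ) (depth ψ)
  | .yest φ => depth φ + 1
  | _ => 0

/-- canLTLEBR: the canonical form of LTLEBR, i.e. `∧/∨`-combinations of formulas
`X^n α`, `X^n G α`, `X^n (α R β)` with `α, β` LTLBP formulas. -/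
inductive IsCanLTLEBR {α : Type} : Formula α → Prop
  | bp {φ} (n : ℕ) : IsLTLBP φ → IsCanLTLEBR (nextPow n φ)
  | glob {φ} (n : ℕ) : IsLTLBP φ → IsCanLTLEBR (nextPow n (.glob φ))
  | rels {φ ψ} (n : ℕ) : IsLTLBP φ → IsLTLBP ψ → IsCanLTLEBR (nextPow n (.rels φ ψ))
  | and {φ ψ} : IsCanLTLEBR φ → IsCanLTLEBR ψ → IsCanLTLEBR (.and φ ψ)
  | or {φ ψ} : IsCanLTLEBR φ → IsCanLTLEBR ψ → IsCanLTLEBR (.or φ ψ)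

/-- Maximum number of nested next (`X`) operators (for canonical-form formulas). -/
def nextDepth {α : Type} : Formula α → ℕ
  | .next φ => nextDepth φ + 1
  | .not φ => nextDepth φ
  | .or φ ψ => max (nextDepth φ) (nextDepth ψ)
  | .and φ ψ => max (nextDepth φ) (nextDepth ψ)
  | .glob φ => nextDepth φ
  | .rels φ ψ => max (nextDepth φ) (nextDepth ψ)
  | .yest φ => nextDepth φ
  | _ => 0

/-- Maximum temporal depth among LTLBP subformulas (for canonical-form formulas). -/
def bpDepth {α : Type} : Formula α → ℕ
  | .next φ => bpDepth φ
  | .glob φ => depth φ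
  | .rels φ ψ => max (depth φ) (depth ψ)
  | .and φ ψ => max (bpDepth φ) (bpDepth ψ)
  | .or φ ψ => max (bpDepth φ) (bpDepth ψ)
  | φ => depth φ

/-- The interval `σ_{[n-d, n]}` of `σ`, as a finite word: it starts at
`max (n-d) 0` and ends at `n`. -/
def window {α : Type} (σ : ℕ → Set α) (d n : ℕ) : List (Set α) :=
  (List.range (min d n + 1)).map (fun t => σ (n - min d n + t))

/-- A pure past formula: all of its temporal operators are past operators. -/
def IsPurePast {α : Type} : Formula α → Prop
  | .atom _ => True
  | .not φ => IsPurePast φ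
  | .or φ ψ => IsPurePast φ ∧ IsPurePast ψ
  | .and φ ψ => IsPurePast φ ∧ IsPurePast ψ
  | .next _ => False
  | .untl _ _ => False
  | .rels _ _ => False
  | .ev _ => False
  | .glob _ => False
  | .yest φ => IsPurePast φ
  | .wyest φ => IsPurePast φ
  | .since φ ψ => IsPurePast φ ∧ IsPurePast ψ
  | .trig φ ψ => IsPurePast φ ∧ IsPurePast ψ
  | .once φ => IsPurePast φ
  | .hist φ => IsPurePast φ

/-- The two-letter alphabet Σ = {p₁, p₂}. -/
inductive PP : Type
  | p1 : PP
  | p2 : PP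
deriving DecidableEq

/-- The state sequence `^{i,k}σ^j`: its `h`-th state is `{p₁}` if `h ∈ {i,k}`,
`{p₂}` if `h = j`, and `{p₁,p₂}` otherwise. -/
def sig (i k j : ℕ) : ℕ → Set PP := fun h =>
  if h = i ∨ h = k then {PP.p1} else if h = j then {PP.p2} else {PP.p1, PP.p2}

/-- The formula `G (p₁ ∨ G p₂)`. -/
def phiG : Formula PP :=
  .glob (.or (.atom PP.p1) (.glob (.atom PP.p2)))

/-!
The language of `G (p₂ ∨ H p₁)` separates the two classes. For `L > 0` let `v` (`wordIn L`)
be `{p₁}` at `2L`, `{p₂}` at `4L` and `{p₁, p₂}` elsewhere, and let `u` (`wordOut L`) be `v`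
with `{p₁}` also at `6L`; `v` satisfies the formula and `u` does not. An LTLEBR formula of
next-depth `< L` cannot tell them apart. Its bounded-future subformulas only read windows of
width `< L`, and every such window of `u` occurs in `v`: the one around `6L` occurs around
`2L`. The operators `G` and `R` only ask a subformula to hold on intervals of positions, and
truth of a future-layer formula on an interval `[l, n]` of `v` (with `l` before `2L`)
transfers to `[l, n]` in `u`, and to all of `[l, ∞)` once `n` is past `4L`, since by then
the interval has shown every window of `u`.
-/

section

variable {α : Type}

theorem BFLayer.mono {b₁ b₂ : Formula α → Prop} (h : ∀ φ, b₁ φ → b₂ φ) {φ : Formula α}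
    (hφ : BFLayer b₁ φ) : BFLayer b₂ φ := by
  induction hφ with
  | base h' => exact .base (h _ h')
  | not _ ih => exact .not ih
  | or _ _ ih₁ ih₂ => exact .or ih₁ ih₂
  | next _ ih => exact .next ih
  | bu a b _ _ ih₁ ih₂ => exact .bu a b ih₁ ih₂

theorem FLayer.mono {b₁ b₂ : Formula α → Prop} (h : ∀ φ, b₁ φ → b₂ φ) {φ : Formula α}
    (hφ : FLayer b₁ φ) : FLayer b₂ φ := by
  induction hφ with
  | bf h' => exact .bf (h'.mono h)
  | and _ _ ih₁ ih₂ => exact .and ih₁ ih₂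
  | next _ ih => exact .next ih
  | glob _ ih => exact .glob ih
  | rels h' _ ih => exact .rels (h'.mono h) ih

theorem BLayer.mono {b₁ b₂ : Formula α → Prop} (h : ∀ φ, b₁ φ → b₂ φ) {φ : Formula α}
    (hφ : BLayer b₁ φ) : BLayer b₂ φ := by
  induction hφ with
  | f h' => exact .f (h'.mono h)
  | or _ _ ih₁ ih₂ => exact .or ih₁ ih₂
  | and _ _ ih₁ ih₂ => exact .and ih₁ ih₂

theorem IsLTLEBR.isLTLEBRP {φ : Formula α} (h : IsLTLEBR φ) : IsLTLEBRP φ :=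
  BLayer.mono (fun _ ⟨p, hp⟩ => hp ▸ PurePastL.atom p) h

def WindowEq (σ : ℕ → Set α) (s : ℕ) (τ : ℕ → Set α) (m d : ℕ) : Prop :=
  ∀ δ ≤ d, σ (s + δ) = τ (m + δ)

theorem WindowEq.mono {σ τ : ℕ → Set α} {s m d d' : ℕ} (h : WindowEq σ s τ m d)
    (hd : d' ≤ d) : WindowEq σ s τ m d' :=
  fun δ hδ => h δ (hδ.trans hd)

theorem WindowEq.succ {σ τ : ℕ → Set α} {s m d : ℕ} (h : WindowEq σ s τ m (d + 1)) :
    WindowEq σ (s + 1) τ (m + 1) d := fun δ hδ => by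
  rw [Nat.add_right_comm s, Nat.add_right_comm m]
  exact h (δ + 1) (by omega)

namespace Formula

def IsAtom (φ : Formula α) : Prop := ∃ p, φ = atom p

inductive IsBounded : Formula α → Prop
  | atom (p : α) : IsBounded (atom p)
  | not {φ} : IsBounded φ → IsBounded (.not φ)
  | or {φ ψ} : IsBounded φ → IsBounded ψ → IsBounded (.or φ ψ)
  | and {φ ψ} : IsBounded φ → IsBounded ψ → IsBounded (.and φ ψ)
  | next {φ} : IsBounded φ → IsBounded (.next φ)

theorem IsBounded.nextPow {φ : Formula α} (h : IsBounded φ) : ∀ n, IsBounded (nextPow n φ)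
  | 0 => h
  | n + 1 => .next (h.nextPow n)

theorem IsBounded.nextChain {φ : Formula α} (h : IsBounded φ) : ∀ n, IsBounded (nextChain φ n)
  | 0 => h
  | n + 1 => .and (h.nextChain n) (h.nextPow (n + 1))

theorem IsBounded.buntilTerm {φ ψ : Formula α} (h₁ : IsBounded φ) (h₂ : IsBounded ψ) :
    ∀ n, IsBounded (buntilTerm φ ψ n)
  | 0 => h₂
  | n + 1 => .and (h₂.nextPow (n + 1)) (h₁.nextChain n)

theorem IsBounded.foldl_or : ∀ (l : List (Formula α)) {φ : Formula α}, IsBounded φ →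
    (∀ ψ ∈ l, IsBounded ψ) → IsBounded (l.foldl .or φ)
  | [], _, h, _ => h
  | _ :: l, _, h, hl =>
      IsBounded.foldl_or l (.or h (hl _ List.mem_cons_self)) fun ψ hψ => hl ψ (.tail _ hψ)

theorem IsBounded.buntil {φ ψ : Formula α} (a b : ℕ) (h₁ : IsBounded φ) (h₂ : IsBounded ψ) :
    IsBounded (buntil a b φ ψ) :=
  IsBounded.foldl_or _ (h₁.buntilTerm h₂ a) fun _ hχ => by
    obtain ⟨n, -, rfl⟩ := List.mem_map.mp hχ
    exact h₁.buntilTerm h₂ n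

theorem IsBounded.sat_iff {φ : Formula α} (hφ : IsBounded φ) {σ τ : ℕ → Set α} {s m : ℕ}
    (hw : WindowEq σ s τ m (nextDepth φ)) : Sat σ φ s ↔ Sat τ φ m := by
  induction hφ generalizing s m with
  | atom p =>
      show p ∈ σ s ↔ p ∈ τ m
      rw [show σ s = τ m from hw 0 le_rfl]
  | not _ ih => exact not_congr (ih hw)
  | or _ _ ih₁ ih₂ =>
      exact or_congr (ih₁ (hw.mono (le_max_left _ _))) (ih₂ (hw.mono (le_max_right _ _)))
  | and _ _ ih₁ ih₂ =>
      exact and_congr (ih₁ (hw.mono (le_max_left _ _))) (ih₂ (hw.mono (le_max_right _ _)))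
  | next _ ih => exact ih hw.succ

theorem sat_of_sat_rels {σ : ℕ → Set α} {φ ψ : Formula α} {i : ℕ} (h : Sat σ (.rels φ ψ) i) :
    Sat σ ψ i := by
  rcases h with h | ⟨n, hn, -, h⟩
  exacts [h i le_rfl, h i le_rfl hn]

def histS (φ : Formula α) : Formula α := .not (.since (.or φ (.not φ)) (.not φ))

theorem sat_histS {σ : ℕ → Set α} {φ : Formula α} {j : ℕ} :
    Sat σ (histS φ) j ↔ ∀ i ≤ j, Sat σ φ i := by
  simp only [histS, Sat]
  exact ⟨fun h i hi => by_contra fun hφ => h ⟨i, hi, hφ, fun _ _ _ => em _⟩,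
    fun h ⟨i, hi, hφ, _⟩ => hφ (h i hi)⟩

end Formula

theorem BFLayer.isBounded {φ : Formula α} (h : BFLayer IsAtom φ) : IsBounded φ := by
  induction h with
  | base h' => obtain ⟨p, rfl⟩ := h'; exact .atom p
  | not _ ih => exact .not ih
  | or _ _ ih₁ ih₂ => exact .or ih₁ ih₂
  | next _ ih => exact .next ih
  | bu a b _ _ ih₁ ih₂ => exact .buntil a b ih₁ ih₂

theorem PurePastL.histS {φ : Formula α} (h : PurePastL φ) : PurePastL (histS φ) :=
  .not (.since (.or h h.not) h.not)

/-- Past the threshold `K`, an interval `[l, n]` of `σ` already shows every window of `τ`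
starting after `l`; this is what lets `G` and `R` transfer from `σ` to `τ`. -/
structure WindowSim (σ τ : ℕ → Set α) (a K h : ℕ) : Prop where
  le : a ≤ K
  window : ∀ d ≤ h, ∀ l n m, l + d ≤ a → l ≤ m → (m ≤ n ∨ K < n) →
    ∃ s, l ≤ s ∧ s ≤ n ∧ WindowEq σ s τ m d
  diag : ∀ m ≤ K, WindowEq σ m τ m h

theorem FLayer.sat_of_windowSim {σ τ : ℕ → Set α} {a K h : ℕ} (hs : WindowSim σ τ a K h)
    {θ : Formula α} (hθ : FLayer IsAtom θ) (hd : nextDepth θ ≤ h) {l n : ℕ}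
    (hl : l + nextDepth θ ≤ a) (hσ : ∀ s, l ≤ s → s ≤ n → Sat σ θ s) {m : ℕ} (hlm : l ≤ m)
    (hmn : m ≤ n ∨ K < n) : Sat τ θ m := by
  have haK := hs.le
  induction hθ generalizing l n m with
  | bf hb =>
      obtain ⟨s, hls, hsn, hw⟩ := hs.window _ hd l n m hl hlm hmn
      exact (hb.isBounded.sat_iff hw).mp (hσ s hls hsn)
  | and _ _ ih₁ ih₂ =>
      simp only [nextDepth] at hd hl
      exact ⟨ih₁ (by omega) (by omega) (fun s h₁ h₂ => (hσ s h₁ h₂).1) hlm hmn,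
        ih₂ (by omega) (by omega) (fun s h₁ h₂ => (hσ s h₁ h₂).2) hlm hmn⟩
  | next _ ih =>
      simp only [nextDepth] at hd hl
      refine ih (l := l + 1) (n := n + 1) (by omega) (by omega) (fun s h₁ h₂ => ?_)
        (by omega) (by omega)
      obtain ⟨s, rfl⟩ := Nat.exists_eq_add_one_of_ne_zero (by omega : s ≠ 0)
      exact hσ s (by omega) (by omega)
  | glob _ ih =>
      exact fun j hj => ih (n := K + 1) hd hl (fun s hs _ => hσ l le_rfl (by omega) s hs)
        (hlm.trans hj) (.inr (Nat.lt_succ_self K))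
  | @rels ψ θ hψ _ ih =>
      simp only [nextDepth] at hd hl
      have hθσ : ∀ s, l ≤ s → s ≤ n → Sat σ θ s := fun s h₁ h₂ => sat_of_sat_rels (hσ s h₁ h₂)
      rcases hσ n (by omega) le_rfl with hall | ⟨n₀, hnn₀, hψn₀, hθn₀⟩
      · refine .inl fun j hj => ih (n := K + 1) (by omega) (by omega) (fun s h₁ _ => ?_)
          (hlm.trans hj) (.inr (Nat.lt_succ_self K))
        rcases le_total s n with hsn | hns
        exacts [hθσ s h₁ hsn, hall s hns]
      have hθσ₀ : ∀ s, l ≤ s → s ≤ n₀ → Sat σ θ s := fun s h₁ h₂ => by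
        rcases le_total s n with hsn | hns
        exacts [hθσ s h₁ hsn, hθn₀ s hns h₂]
      by_cases hK : K < n₀
      · exact .inl fun j hj => ih (by omega) (by omega) hθσ₀ (hlm.trans hj) (.inr hK)
      · refine .inr ⟨n₀, by omega, ?_, fun j h₁ h₂ =>
          ih (by omega) (by omega) hθσ₀ (hlm.trans h₁) (.inl h₂)⟩
        exact (hψ.isBounded.sat_iff ((hs.diag n₀ (by omega)).mono (by omega))).mp hψn₀

theorem BLayer.sat_of_windowSim {σ τ : ℕ → Set α} {a K h : ℕ} (hs : WindowSim σ τ a K h)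
    {χ : Formula α} (hχ : BLayer IsAtom χ) (hdh : nextDepth χ ≤ h) (hda : nextDepth χ ≤ a)
    (hσ : Sat σ χ 0) : Sat τ χ 0 := by
  induction hχ with
  | f hθ =>
      refine hθ.sat_of_windowSim hs hdh (by omega) (fun s _ hs0 => ?_) le_rfl (.inl le_rfl)
      rwa [Nat.le_zero.mp hs0]
  | or _ _ ih₁ ih₂ =>
      simp only [nextDepth] at hdh hda
      exact hσ.imp (ih₁ (by omega) (by omega)) (ih₂ (by omega) (by omega))
  | and _ _ ih₁ ih₂ =>
      simp only [nextDepth] at hdh hda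
      exact ⟨ih₁ (by omega) (by omega) hσ.1, ih₂ (by omega) (by omega) hσ.2⟩

end

def phiGPast : Formula PP := .glob (.or (.atom .p2) (histS (.atom .p1)))

theorem phiGPast_isLTLEBRP : IsLTLEBRP phiGPast :=
  .f (.glob (.bf (.or (.base (.atom _)) (.base (PurePastL.atom _).histS))))

theorem mem_lang_phiGPast {σ : ℕ → Set PP} :
    σ ∈ Lang phiGPast ↔ ∀ j, PP.p2 ∈ σ j ∨ ∀ i ≤ j, PP.p1 ∈ σ i := by
  simp only [Lang, Set.mem_ofPred_eq, phiGPast, Sat, sat_histS, zero_le, true_implies]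

def wordIn (L : ℕ) : ℕ → Set PP := sig (2 * L) (2 * L) (4 * L)

def wordOut (L : ℕ) : ℕ → Set PP := sig (2 * L) (6 * L) (4 * L)

theorem p1_mem_wordIn {L x : ℕ} (hx : x ≠ 4 * L) : PP.p1 ∈ wordIn L x := by
  simp only [wordIn, sig]
  split_ifs <;> simp

theorem p2_mem_wordIn {L x : ℕ} (hx : x ≠ 2 * L) : PP.p2 ∈ wordIn L x := by
  simp only [wordIn, sig]
  split_ifs <;> simp_all

theorem p2_not_mem_wordOut (L : ℕ) : PP.p2 ∉ wordOut L (6 * L) := by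
  simp [wordOut, sig]

theorem p1_not_mem_wordOut {L : ℕ} (hL : 0 < L) : PP.p1 ∉ wordOut L (4 * L) := by
  simp only [wordOut, sig]
  split_ifs <;> simp_all

theorem wordIn_mem {L : ℕ} (hL : 0 < L) : wordIn L ∈ Lang phiGPast :=
  mem_lang_phiGPast.mpr fun j =>
    if hj : j = 2 * L then .inr fun _ hi => p1_mem_wordIn (by omega) else .inl (p2_mem_wordIn hj)

theorem wordOut_not_mem {L : ℕ} (hL : 0 < L) : wordOut L ∉ Lang phiGPast := fun h =>
  (mem_lang_phiGPast.mp h (6 * L)).elim (p2_not_mem_wordOut L)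
    fun h₆ => p1_not_mem_wordOut hL (h₆ _ (by omega))

theorem wordOut_eq_wordIn (L : ℕ) {x : ℕ} (hx : x ≠ 6 * L) : wordOut L x = wordIn L x := by
  simp only [wordOut, wordIn, sig]
  split_ifs <;> first | rfl | omega

theorem wordOut_eq_wordIn_sub (L : ℕ) {x : ℕ} (h₁ : 4 * L < x) (h₂ : x < 8 * L) :
    wordOut L x = wordIn L (x - 4 * L) := by
  simp only [wordOut, wordIn, sig]
  split_ifs <;> first | rfl | omega

theorem wordOut_eq_wordIn_of_lt (L : ℕ) {x y : ℕ} (hx : 4 * L < x) (hx₆ : x ≠ 6 * L)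
    (hy : 4 * L < y) : wordOut L x = wordIn L y := by
  simp only [wordOut, wordIn, sig]
  split_ifs <;> first | rfl | omega

theorem windowSim_wordIn_wordOut {L h : ℕ} (hh : h < L) :
    WindowSim (wordIn L) (wordOut L) (2 * L) (4 * L) h where
  le := by omega
  window d hd l n m hl hlm hmn := by
    by_cases h₆ : m ≤ 6 * L ∧ 6 * L ≤ m + d
    · exact ⟨m - 4 * L, by omega, by omega, fun δ hδ =>
        (wordOut_eq_wordIn_sub L (by omega) (by omega)).trans (by congr 1; omega) |>.symm⟩
    by_cases hm : m ≤ n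
    · exact ⟨m, hlm, hm, fun δ hδ => (wordOut_eq_wordIn L (by omega)).symm⟩
    · exact ⟨4 * L + 1, by omega, by omega, fun δ hδ =>
        (wordOut_eq_wordIn_of_lt L (by omega) (by omega) (by omega)).symm⟩
  diag m hm δ hδ := (wordOut_eq_wordIn L (by omega)).symm

/-- `⟦LTLEBR⟧ ⊊ ⟦LTLEBR+P⟧`. -/
theorem ltlebr_lt_ltlebrp :
    {L : Set (ℕ → Set PP) | ∃ χ : Formula PP, IsLTLEBR χ ∧ Lang χ = L} ⊂
      {L : Set (ℕ → Set PP) | ∃ χ : Formula PP, IsLTLEBRP χ ∧ Lang χ = L} := by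
  refine ⟨fun _ ⟨χ, hχ, hL⟩ => ⟨χ, hχ.isLTLEBRP, hL⟩, fun hsub => ?_⟩
  obtain ⟨χ, hχ, hlang⟩ := hsub ⟨phiGPast, phiGPast_isLTLEBRP, rfl⟩
  set h := nextDepth χ
  have hin : wordIn (h + 1) ∈ Lang χ := hlang ▸ wordIn_mem h.succ_pos
  have hout : Sat (wordOut (h + 1)) χ 0 :=
    BLayer.sat_of_windowSim (windowSim_wordIn_wordOut h.lt_succ_self) hχ le_rfl (by omega) hin
  exact wordOut_not_mem h.succ_pos (hlang ▸ hout)
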